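/- arXiv:2010.01287 — 2 statements merged into one kernel-verified Lean document; each statement's English description precedes it below -/
import Mathlib

section
/- Let x_1,…,x_m ∈ ℝ^d solve the system ‖x_i − x_j‖₂ = d_{ij} for all ij ∈ E_ss and ‖x_i − a_k‖₂ = d_{ik} for all ik ∈ E_sa. Then the matrix Z = [[I_d, X],[Xᵀ, XᵀX]] with X = (x₁,…,x_m) is a feasible point of the rank-constrained SDP: A_{ij} • Z = d_{ij}², A_{ik} • Z = d_{ik}², Z_{(1:d,1:d)} = I_d, rank(Z) ≤ d, and Z ⪰ 0. Conversely, any feasible Z of this SDP yields a solution of the distance system via its off-diagonal block X = Z_{(1:d, d+1:d+m)}. -/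
/-!
With `B = [I | X]`, the matrix `Z` is the Gram matrix `Bᵀ B`, so each constraint `A • Z` with
`A = v vᵀ` equals `‖B v‖²`, which for the sensor and anchor vectors `v` is the squared distance
`‖x_i - x_j‖²` resp. `‖x_i - a_k‖²`. Conversely, if `Z` is symmetric with top-left block `I`,
the LDU factorisation through the Schur complement gives
`rank Z = d + rank (Z₂₂ - Xᵀ X)`, so `rank Z ≤ d` forces `Z₂₂ = Xᵀ X` and `Z` is again a Gram
matrix of this form.
-/

open Matrix

namespace Matrix

variable {ι n R : Type*} [Fintype ι] [Fintype n] [CommRing R]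

theorem trace_vecMulVec_transpose_mul_gram (B : Matrix ι n R) (v : n → R) :
    trace ((vecMulVec v v)ᵀ * (Bᵀ * B)) = (B *ᵥ v) ⬝ᵥ (B *ᵥ v) := by
  rw [transpose_vecMulVec, vecMulVec_mul, trace_vecMulVec, ← vecMul_vecMul, vecMul_transpose,
    dotProduct_comm, ← dotProduct_mulVec]

omit [Fintype n] in
theorem fromBlocks_one_eq_transpose_mul_self [DecidableEq ι] (X : Matrix ι n R) :
    fromBlocks 1 X Xᵀ (Xᵀ * X) = (fromCols 1 X)ᵀ * fromCols 1 X := by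
  rw [transpose_fromCols, fromRows_mul_fromCols, transpose_one]
  simp only [Matrix.one_mul, Matrix.mul_one]

theorem eq_zero_of_rank_fromBlocks_one_le [IsDomain R] [DecidableEq ι]
    (S : Matrix n n R) (h : (fromBlocks (1 : Matrix ι ι R) 0 0 S).rank ≤ Fintype.card ι) :
    S = 0 := by
  ext i j
  by_contra hij
  -- a nonzero entry `S i j` gives a nonsingular minor of size `card ι + 1`
  let M := (fromBlocks (1 : Matrix ι ι R) 0 0 S).submatrix
    (Sum.elim Sum.inl fun _ : Unit => Sum.inr i) (Sum.elim Sum.inl fun _ : Unit => Sum.inr j)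
  have hM : M = fromBlocks 1 0 0 (of fun _ _ => S i j) := by
    ext (_ | _) (_ | _) <;> rfl
  have hdet : M.det ≠ 0 := by
    simpa [hM, det_fromBlocks_zero₁₂] using hij
  have hrank : M.rank ≤ Fintype.card ι := (rank_submatrix_le _ _ _).trans h
  rw [rank_of_det_ne_zero hdet, Fintype.card_sum, Fintype.card_unit] at hrank
  omega

theorem rank_fromBlocks_one_eq_schur [DecidableEq ι] [DecidableEq n]
    (X : Matrix ι n R) (D : Matrix n n R) :
    (fromBlocks 1 X Xᵀ D).rank = (fromBlocks (1 : Matrix ι ι R) 0 0 (D - Xᵀ * X)).rank := by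
  let : Invertible (1 : Matrix ι ι R) := invertibleOne
  rw [fromBlocks_eq_of_invertible₁₁ (A := (1 : Matrix ι ι R)), rank_mul_eq_left_of_isUnit_det,
    rank_mul_eq_right_of_isUnit_det] <;> simp

theorem eq_fromBlocks_gram_of_isSymm_of_rank_le [IsDomain R] [DecidableEq ι] [DecidableEq n]
    {Z : Matrix (ι ⊕ n) (ι ⊕ n) R} (hZ : Z.IsSymm)
    (h₁₁ : Z.toBlocks₁₁ = 1) (hrank : Z.rank ≤ Fintype.card ι) :
    Z = fromBlocks 1 Z.toBlocks₁₂ Z.toBlocks₁₂ᵀ (Z.toBlocks₁₂ᵀ * Z.toBlocks₁₂) := by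
  have h₂₁ : Z.toBlocks₂₁ = Z.toBlocks₁₂ᵀ := by
    conv_lhs => rw [← hZ.eq]
    rfl
  have hblocks : Z = fromBlocks 1 Z.toBlocks₁₂ Z.toBlocks₁₂ᵀ Z.toBlocks₂₂ := by
    conv_lhs => rw [← fromBlocks_toBlocks Z, h₁₁, h₂₁]
  have hschur : Z.toBlocks₂₂ - Z.toBlocks₁₂ᵀ * Z.toBlocks₁₂ = 0 := by
    apply eq_zero_of_rank_fromBlocks_one_le (ι := ι)
    rwa [← rank_fromBlocks_one_eq_schur, ← hblocks]
  rwa [← sub_eq_zero.mp hschur]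

end Matrix

theorem EuclideanSpace.norm_equiv_symm_sq {ι : Type*} [Fintype ι] (y : ι → ℝ) :
    ‖(EuclideanSpace.equiv ι ℝ).symm y‖ ^ 2 = y ⬝ᵥ y := by
  rw [← real_inner_self_eq_norm_sq, EuclideanSpace.inner_eq_star_dotProduct]
  simp

section SensorNetwork

variable {ι n : Type*} [Fintype ι] [Fintype n] [DecidableEq ι] [DecidableEq n]

theorem trace_sensorSensor_gram (x : n → ι → ℝ) (i j : n) :
    trace ((vecMulVec (Sum.elim (0 : ι → ℝ) (Pi.single i 1 - Pi.single j 1))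
        (Sum.elim (0 : ι → ℝ) (Pi.single i 1 - Pi.single j 1)))ᵀ *
      fromBlocks 1 (of x)ᵀ (of x)ᵀᵀ ((of x)ᵀᵀ * (of x)ᵀ)) =
      ‖(EuclideanSpace.equiv ι ℝ).symm (x i - x j)‖ ^ 2 := by
  rw [fromBlocks_one_eq_transpose_mul_self, trace_vecMulVec_transpose_mul_gram,
    fromCols_mulVec_sumElim, EuclideanSpace.norm_equiv_symm_sq]
  simp [mulVec_sub]

theorem trace_sensorAnchor_gram (x : n → ι → ℝ) (a : ι → ℝ) (i : n) :
    trace ((vecMulVec (Sum.elim a (-(Pi.single i 1))) (Sum.elim a (-(Pi.single i 1))))ᵀ *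
      fromBlocks 1 (of x)ᵀ (of x)ᵀᵀ ((of x)ᵀᵀ * (of x)ᵀ)) =
      ‖(EuclideanSpace.equiv ι ℝ).symm (x i - a)‖ ^ 2 := by
  rw [fromBlocks_one_eq_transpose_mul_self, trace_vecMulVec_transpose_mul_gram,
    fromCols_mulVec_sumElim, EuclideanSpace.norm_equiv_symm_sq, ← neg_sub, neg_dotProduct_neg]
  simp [mulVec_neg, sub_eq_add_neg]

end SensorNetwork

/-- Equivalence between solutions of the distance system of sensor network localization
and feasible points of the rank-constrained SDP. -/
theorem snl_system_iff_rank_sdp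
    (d m nA : ℕ) (a : Fin nA → (Fin d → ℝ))
    (Ess : Set (Fin m × Fin m)) (Esa : Set (Fin m × Fin nA))
    (dss : Fin m → Fin m → ℝ) (dsa : Fin m → Fin nA → ℝ)
    (hdss : ∀ e ∈ Ess, 0 ≤ dss e.1 e.2) (hdsa : ∀ e ∈ Esa, 0 ≤ dsa e.1 e.2)
    (Ass : Fin m → Fin m → Matrix (Fin d ⊕ Fin m) (Fin d ⊕ Fin m) ℝ)
    (hAss : ∀ i j : Fin m, Ass i j =
      Matrix.vecMulVec (Sum.elim (0 : Fin d → ℝ) (Pi.single i 1 - Pi.single j 1))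
        (Sum.elim (0 : Fin d → ℝ) (Pi.single i 1 - Pi.single j 1)))
    (Asa : Fin m → Fin nA → Matrix (Fin d ⊕ Fin m) (Fin d ⊕ Fin m) ℝ)
    (hAsa : ∀ (i : Fin m) (k : Fin nA), Asa i k =
      Matrix.vecMulVec (Sum.elim (a k) (-(Pi.single i 1)))
        (Sum.elim (a k) (-(Pi.single i 1)))) :
    -- forward direction: a solution of the distance system gives a feasible Z
    ((∀ x : Fin m → (Fin d → ℝ),
      (∀ e ∈ Ess, ‖(EuclideanSpace.equiv (Fin d) ℝ).symm (x e.1 - x e.2)‖ = dss e.1 e.2) →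
      (∀ e ∈ Esa, ‖(EuclideanSpace.equiv (Fin d) ℝ).symm (x e.1 - a e.2)‖ = dsa e.1 e.2) →
      ∀ X : Matrix (Fin d) (Fin m) ℝ, (∀ l i, X l i = x i l) →
      ∀ Z : Matrix (Fin d ⊕ Fin m) (Fin d ⊕ Fin m) ℝ,
        Z = Matrix.fromBlocks 1 X X.transpose (X.transpose * X) →
        (∀ e ∈ Ess, Matrix.trace ((Ass e.1 e.2).transpose * Z) = (dss e.1 e.2) ^ 2) ∧
        (∀ e ∈ Esa, Matrix.trace ((Asa e.1 e.2).transpose * Z) = (dsa e.1 e.2) ^ 2) ∧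
        Z.toBlocks₁₁ = 1 ∧ Z.rank ≤ d ∧ Z.PosSemidef)) ∧
    -- converse direction: a feasible Z yields a solution of the distance system
    (∀ Z : Matrix (Fin d ⊕ Fin m) (Fin d ⊕ Fin m) ℝ,
      (∀ e ∈ Ess, Matrix.trace ((Ass e.1 e.2).transpose * Z) = (dss e.1 e.2) ^ 2) →
      (∀ e ∈ Esa, Matrix.trace ((Asa e.1 e.2).transpose * Z) = (dsa e.1 e.2) ^ 2) →
      Z.toBlocks₁₁ = 1 → Z.rank ≤ d → Z.PosSemidef →
      ∀ x : Fin m → (Fin d → ℝ), (∀ i l, x i l = Z.toBlocks₁₂ l i) →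
        (∀ e ∈ Ess, ‖(EuclideanSpace.equiv (Fin d) ℝ).symm (x e.1 - x e.2)‖ = dss e.1 e.2) ∧
        (∀ e ∈ Esa, ‖(EuclideanSpace.equiv (Fin d) ℝ).symm (x e.1 - a e.2)‖ = dsa e.1 e.2)) := by
  constructor
  · rintro x hss hsa X hX Z rfl
    obtain rfl : X = (of x)ᵀ := by ext l i; exact hX l i
    refine ⟨fun e he => ?_, fun e he => ?_, toBlocks_fromBlocks₁₁ _ _ _ _, ?_, ?_⟩
    · rw [hAss, trace_sensorSensor_gram, hss e he]
    · rw [hAsa, trace_sensorAnchor_gram, hsa e he]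
    · rw [fromBlocks_one_eq_transpose_mul_self]
      exact (rank_mul_le_left _ _).trans ((rank_le_card_width _).trans_eq (Fintype.card_fin d))
    · rw [fromBlocks_one_eq_transpose_mul_self]
      exact posSemidef_conjTranspose_mul_self _
  · intro Z hss hsa h₁₁ hrank hpsd x hx
    have hX : Z.toBlocks₁₂ = (of x)ᵀ := by ext l i; exact (hx i l).symm
    have hZ := eq_fromBlocks_gram_of_isSymm_of_rank_le (isHermitian_iff_isSymm.mp hpsd.1) h₁₁
      (by rwa [Fintype.card_fin])
    rw [hX] at hZ
    subst hZ
    refine ⟨fun e he => ?_, fun e he => ?_⟩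
    · rw [← pow_left_inj₀ (norm_nonneg _) (hdss e he) two_ne_zero, ← trace_sensorSensor_gram,
        ← hAss, hss e he]
    · rw [← pow_left_inj₀ (norm_nonneg _) (hdsa e he) two_ne_zero, ← trace_sensorAnchor_gram,
        ← hAsa, hsa e he]
end

section
/- Suppose γ > ½ √(2 f₀) · max_{1≤i≤m} √(4|E_ss[i]| + |E_sa[i]|), where f₀ ≥ 0 is a bound with ½Σ_{ij∈E_ss} α_{ij}² + ½Σ_{ik∈E_sa} α_{ik}² ≤ f₀. Define the m×m symmetric matrix Ā = Σ_{ij∈E_ss} α_{ij}(e_i−e_j)(e_i−e_j)ᵀ + Σ_{ik∈E_sa} α_{ik} e_i e_iᵀ. Then 2γ I_m − Ā is positive definite. -/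
/-!
Since α(xᵢ − xⱼ)² ≤ 2|α|(xᵢ² + xⱼ²) and α xᵢ² ≤ |α| xᵢ², the quadratic form of `Ā` is at most
`Σᵢ wᵢ xᵢ²` with `wᵢ = 2 Σ_{E_ss[i]} |α_ij| + Σ_{E_sa[i]} |α_ik|`, the quantity dominating the
Gershgorin bound of row `i`. Cauchy–Schwarz gives `wᵢ ≤ √(4|E_ss[i]| + |E_sa[i]|) · √(2f₀) < 2γ`,
so `xᵀ(2γI − Ā)x > 0` for every `x ≠ 0`.
-/

open Matrix Finset

lemma sum_mul_sum_filter_comm {α β R : Type*} [Fintype β] [NonUnitalNonAssocSemiring R]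
    (s : Finset α) (P : α → β → Prop) [∀ a b, Decidable (P a b)] (w : α → R) (y : β → R) :
    ∑ a ∈ s, w a * ∑ b with P a b, y b = ∑ b, (∑ a ∈ s with P a b, w a) * y b := by
  simp only [Finset.mul_sum, Finset.sum_mul]
  exact Finset.sum_comm' (by simp)

lemma add_sq_le_add_mul_add {p q a b c d : ℝ} (ha : 0 ≤ a) (hb : 0 ≤ b) (hc : 0 ≤ c)
    (hd : 0 ≤ d) (hp : p ^ 2 ≤ a * c) (hq : q ^ 2 ≤ b * d) :
    (p + q) ^ 2 ≤ (a + b) * (c + d) := by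
  have hpq : 2 * (p * q) ≤ a * d + b * c := by
    have : (2 * (p * q)) ^ 2 ≤ (a * d + b * c) ^ 2 := by
      nlinarith [mul_le_mul hp hq (sq_nonneg q) (by positivity), sq_nonneg (a * d - b * c)]
    exact le_of_abs_le (abs_le_of_sq_le_sq this (by positivity))
  nlinarith

/-- The sum runs over `{i, j}`, so a loop `i = j` is counted once, as in `E_ss[i]`. -/
lemma sq_sub_le_two_mul_sum_sq {n : Type*} [Fintype n] [DecidableEq n] (x : n → ℝ) (i j : n) :
    (x i - x j) ^ 2 ≤ 2 * ∑ k with i = k ∨ j = k, x k ^ 2 := by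
  rw [filter_or, filter_eq, filter_eq, if_pos (mem_univ _), if_pos (mem_univ _)]
  obtain rfl | hij := eq_or_ne i j
  · simpa using sq_nonneg (x i)
  · rw [sum_union (by simpa using hij), sum_singleton, sum_singleton]
    nlinarith [sq_nonneg (x i + x j)]

section

variable {n : Type*} [Fintype n]

lemma dotProduct_vecMulVec_self_mulVec (u x : n → ℝ) :
    x ⬝ᵥ vecMulVec u u *ᵥ x = (u ⬝ᵥ x) ^ 2 := by
  rw [vecMulVec_mulVec, op_smul_eq_smul, dotProduct_smul, smul_eq_mul, dotProduct_comm, sq]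

lemma dotProduct_sum_smul_vecMulVec_mulVec {ι : Type*} (s : Finset ι) (c : ι → ℝ)
    (u : ι → n → ℝ) (x : n → ℝ) :
    x ⬝ᵥ (∑ e ∈ s, c e • vecMulVec (u e) (u e)) *ᵥ x = ∑ e ∈ s, c e * (u e ⬝ᵥ x) ^ 2 := by
  simp [sum_mulVec, dotProduct_sum, smul_mulVec, dotProduct_vecMulVec_self_mulVec]

lemma isHermitian_sum_smul_vecMulVec {ι : Type*} (s : Finset ι) (c : ι → ℝ)
    (u : ι → n → ℝ) : (∑ e ∈ s, c e • vecMulVec (u e) (u e)).IsHermitian :=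
  isSelfAdjoint_sum s fun e _ => (IsSelfAdjoint.all (c e)).smul <| by
    simpa only [star_trivial] using
      (posSemidef_vecMulVec_self_star (u e)).isHermitian.isSelfAdjoint

lemma posDef_smul_one_sub_of_dotProduct_mulVec_le [DecidableEq n] {A : Matrix n n ℝ}
    (hA : A.IsHermitian) {M t : ℝ} (hAM : ∀ x, x ⬝ᵥ A *ᵥ x ≤ M * (x ⬝ᵥ x)) (hMt : M < t) :
    (t • 1 - A).PosDef := by
  refine .of_dotProduct_mulVec_pos ((isHermitian_one.smul (.all t)).sub hA) fun x hx => ?_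
  have hxx : 0 < x ⬝ᵥ x := by simpa using dotProduct_self_star_pos_iff.mpr hx
  rw [star_trivial, sub_mulVec, dotProduct_sub, smul_mulVec, one_mulVec, dotProduct_smul,
    smul_eq_mul]
  nlinarith [hAM x]

end

section SensorNetwork

variable {n κ : Type*} [DecidableEq n]
  (Ess : Finset (n × n)) (Esa : Finset (n × κ)) (αss : n × n → ℝ) (αsa : n × κ → ℝ)

/-- The matrix `Ā`. -/
def sensorMatrix [Fintype n] : Matrix n n ℝ :=
  ∑ e ∈ Ess, αss e • vecMulVec (Pi.single e.1 1 - Pi.single e.2 1)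
    (Pi.single e.1 1 - Pi.single e.2 1)
  + ∑ e ∈ Esa, αsa e • vecMulVec (Pi.single e.1 1) (Pi.single e.1 1)

def incidentWeight (i : n) : ℝ :=
  2 * ∑ e ∈ Ess with e.1 = i ∨ e.2 = i, |αss e| + ∑ e ∈ Esa with e.1 = i, |αsa e|

lemma isHermitian_sensorMatrix [Fintype n] : (sensorMatrix Ess Esa αss αsa).IsHermitian :=
  (isHermitian_sum_smul_vecMulVec _ _ _).add (isHermitian_sum_smul_vecMulVec _ _ _)

lemma dotProduct_sensorMatrix_mulVec [Fintype n] (x : n → ℝ) :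
    x ⬝ᵥ sensorMatrix Ess Esa αss αsa *ᵥ x
      = ∑ e ∈ Ess, αss e * (x e.1 - x e.2) ^ 2 + ∑ e ∈ Esa, αsa e * x e.1 ^ 2 := by
  simp [sensorMatrix, add_mulVec, dotProduct_sum_smul_vecMulVec_mulVec, sub_dotProduct]

lemma dotProduct_sensorMatrix_mulVec_le [Fintype n] (x : n → ℝ) :
    x ⬝ᵥ sensorMatrix Ess Esa αss αsa *ᵥ x ≤ ∑ i, incidentWeight Ess Esa αss αsa i * x i ^ 2 := by
  have hsa (e : n × κ) : x e.1 ^ 2 = ∑ k with e.1 = k, x k ^ 2 := by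
    rw [filter_eq, if_pos (mem_univ _), sum_singleton]
  calc x ⬝ᵥ sensorMatrix Ess Esa αss αsa *ᵥ x
      ≤ ∑ e ∈ Ess, 2 * |αss e| * ∑ k with e.1 = k ∨ e.2 = k, x k ^ 2
        + ∑ e ∈ Esa, |αsa e| * ∑ k with e.1 = k, x k ^ 2 := by
        rw [dotProduct_sensorMatrix_mulVec]
        refine add_le_add (sum_le_sum fun e _ => ?_) (sum_le_sum fun e _ => ?_)
        · rw [mul_comm 2, mul_assoc]
          exact (mul_le_mul_of_nonneg_right (le_abs_self _) (sq_nonneg _)).trans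
            (mul_le_mul_of_nonneg_left (sq_sub_le_two_mul_sum_sq x _ _) (abs_nonneg _))
        · exact hsa e ▸ mul_le_mul_of_nonneg_right (le_abs_self _) (sq_nonneg _)
    _ = ∑ i, incidentWeight Ess Esa αss αsa i * x i ^ 2 := by
        simp only [sum_mul_sum_filter_comm, ← sum_add_distrib, incidentWeight, ← mul_sum,
          add_mul]

lemma incidentWeight_le (i : n) :
    incidentWeight Ess Esa αss αsa i ≤
      √(4 * #{e ∈ Ess | e.1 = i ∨ e.2 = i} + #{e ∈ Esa | e.1 = i}) *
        √(∑ e ∈ Ess, αss e ^ 2 + ∑ e ∈ Esa, αsa e ^ 2) := by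
  set E₁ := Ess.filter fun e => e.1 = i ∨ e.2 = i
  set E₂ := Esa.filter fun e => e.1 = i
  have h₁ : (2 * ∑ e ∈ E₁, |αss e|) ^ 2 ≤ 4 * #E₁ * ∑ e ∈ E₁, αss e ^ 2 := by
    have := sq_sum_le_card_mul_sum_sq (s := E₁) (f := fun e => |αss e|)
    simp only [sq_abs] at this
    linarith
  have h₂ : (∑ e ∈ E₂, |αsa e|) ^ 2 ≤ #E₂ * ∑ e ∈ E₂, αsa e ^ 2 := by
    simpa only [sq_abs] using sq_sum_le_card_mul_sum_sq (s := E₂) (f := fun e => |αsa e|)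
  rw [← Real.sqrt_mul (by positivity)]
  refine Real.le_sqrt_of_sq_le ((add_sq_le_add_mul_add (by positivity) (by positivity)
    (by positivity) (by positivity) h₁ h₂).trans ?_)
  refine mul_le_mul_of_nonneg_left (add_le_add ?_ ?_) (by positivity) <;>
    exact sum_le_sum_of_subset_of_nonneg (filter_subset _ _) fun _ _ _ => sq_nonneg _

lemma dotProduct_sensorMatrix_mulVec_le_mul [Fintype n] {M : ℝ}
    (hM : ∀ i, incidentWeight Ess Esa αss αsa i ≤ M) (x : n → ℝ) :
    x ⬝ᵥ sensorMatrix Ess Esa αss αsa *ᵥ x ≤ M * (x ⬝ᵥ x) :=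
  calc x ⬝ᵥ sensorMatrix Ess Esa αss αsa *ᵥ x
      ≤ ∑ i, incidentWeight Ess Esa αss αsa i * x i ^ 2 := dotProduct_sensorMatrix_mulVec_le ..
    _ ≤ ∑ i, M * x i ^ 2 := sum_le_sum fun i _ => mul_le_mul_of_nonneg_right (hM i) (sq_nonneg _)
    _ = M * (x ⬝ᵥ x) := by simp only [← mul_sum, dotProduct, sq]

end SensorNetwork

theorem two_gamma_minus_A_posdef_general
    (m nA : ℕ) (hm : 0 < m) (f₀ γ : ℝ)
    (Ess : Finset (Fin m × Fin m)) (Esa : Finset (Fin m × Fin nA))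
    (αss : Fin m × Fin m → ℝ) (αsa : Fin m × Fin nA → ℝ)
    (hbound : 1 / 2 * ∑ e ∈ Ess, (αss e) ^ 2 + 1 / 2 * ∑ e ∈ Esa, (αsa e) ^ 2 ≤ f₀)
    (hγ : 1 / 2 * Real.sqrt (2 * f₀) *
        Finset.univ.sup' (Finset.univ_nonempty_iff.mpr ⟨⟨0, hm⟩⟩)
          (fun i : Fin m => Real.sqrt
            (4 * ((Ess.filter fun e => e.1 = i ∨ e.2 = i).card : ℝ) +
              ((Esa.filter fun e => e.1 = i).card : ℝ))) < γ)
    (A : Matrix (Fin m) (Fin m) ℝ)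
    (hA : A = ∑ e ∈ Ess, αss e •
        Matrix.vecMulVec (Pi.single e.1 1 - Pi.single e.2 1)
          (Pi.single e.1 1 - Pi.single e.2 1)
      + ∑ e ∈ Esa, αsa e • Matrix.vecMulVec (Pi.single e.1 1) (Pi.single e.1 1)) :
    ((2 * γ) • (1 : Matrix (Fin m) (Fin m) ℝ) - A).PosDef := by
  set degreeBound := fun i : Fin m =>
    √(4 * #{e ∈ Ess | e.1 = i ∨ e.2 = i} + #{e ∈ Esa | e.1 = i})
  have hweight (i : Fin m) : incidentWeight Ess Esa αss αsa i ≤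
      √(2 * f₀) * univ.sup' (univ_nonempty_iff.mpr ⟨⟨0, hm⟩⟩) degreeBound := by
    have hi := le_sup' degreeBound (mem_univ i)
    rw [mul_comm]
    exact (incidentWeight_le Ess Esa αss αsa i).trans (mul_le_mul hi
      (Real.sqrt_le_sqrt (by linarith)) (Real.sqrt_nonneg _) ((Real.sqrt_nonneg _).trans hi))
  subst hA
  exact posDef_smul_one_sub_of_dotProduct_mulVec_le (isHermitian_sensorMatrix Ess Esa αss αsa)
    (dotProduct_sensorMatrix_mulVec_le_mul Ess Esa αss αsa hweight) (by linarith)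

/-- If `γ` exceeds `½√(2f₀)·maxᵢ√(4|E_ss[i]| + |E_sa[i]|)` and the residuals `α` satisfy
the quadratic bound `½Σα² ≤ f₀`, then `2γI − Ā` is positive definite, where
`Ā = Σ α_{ij}(eᵢ−eⱼ)(eᵢ−eⱼ)ᵀ + Σ α_{ik} eᵢeᵢᵀ`. -/
theorem two_gamma_minus_A_posdef
    (m nA : ℕ) (hm : 0 < m) (f₀ γ : ℝ) (hf₀ : 0 ≤ f₀)
    (Ess : Finset (Fin m × Fin m)) (Esa : Finset (Fin m × Fin nA))
    (αss : Fin m × Fin m → ℝ) (αsa : Fin m × Fin nA → ℝ)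
    (hbound : 1 / 2 * ∑ e ∈ Ess, (αss e) ^ 2 + 1 / 2 * ∑ e ∈ Esa, (αsa e) ^ 2 ≤ f₀)
    (hγ : 1 / 2 * Real.sqrt (2 * f₀) *
        Finset.univ.sup' (Finset.univ_nonempty_iff.mpr ⟨⟨0, hm⟩⟩)
          (fun i : Fin m => Real.sqrt
            (4 * ((Ess.filter fun e => e.1 = i ∨ e.2 = i).card : ℝ) +
              ((Esa.filter fun e => e.1 = i).card : ℝ))) < γ)
    (A : Matrix (Fin m) (Fin m) ℝ)
    (hA : A = ∑ e ∈ Ess, αss e •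
        Matrix.vecMulVec (Pi.single e.1 1 - Pi.single e.2 1)
          (Pi.single e.1 1 - Pi.single e.2 1)
      + ∑ e ∈ Esa, αsa e • Matrix.vecMulVec (Pi.single e.1 1) (Pi.single e.1 1)) :
    ((2 * γ) • (1 : Matrix (Fin m) (Fin m) ℝ) - A).PosDef :=
  two_gamma_minus_A_posdef_general m nA hm f₀ γ Ess Esa αss αsa hbound hγ A hA
end
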